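/- Let d ≥ 1 and n > d be integers, let δ ∈ (0,1), and set p = e^{−1/d}. Let r be an integer with (1−p)(n−d) ≤ r ≤ (1−p)(n−d+1), and let m be a positive integer satisfying m − √(2·e·m·ln(2/δ)) ≥ e·d·ln(2n/δ). Let M be an m×n RrSD random matrix with row weight r. Then for every set I ⊆ {1,…,n} with |I| ≤ d, the probability that M is (n,I)-disjunct is at least 1 − δ. -/

import Mathlib

open scoped Classical

noncomputable section

/-- A 0-1 matrix `M` (with `true` = 1) is `(n,I)`-disjunct if for every item `i ∉ I`
there is a row containing `i` but no element of `I`. -/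
def Disjunct {m n : ℕ} (I : Finset (Fin n)) (M : Fin m → Fin n → Bool) : Prop :=
  ∀ i : Fin n, i ∉ I → ∃ t : Fin m, M t i = true ∧ ∀ j ∈ I, M t j = false

/-- The weight (number of ones) of a 0-1 vector. -/
def rowWeight {n : ℕ} (v : Fin n → Bool) : ℕ :=
  (Finset.univ.filter fun j => v j = true).card

/-- Probability of the event `pred` for an `m × n` RrSD random matrix with row weight `r`:
the rows are chosen independently and uniformly from all 0-1 vectors of weight `r`. -/
def rrsdProb (m n r : ℕ) (pred : (Fin m → Fin n → Bool) → Prop) : ℝ :=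
  ∑ M : Fin m → Fin n → Bool,
    (if pred M then
      ∏ t : Fin m, (if rowWeight (M t) = r then ((n.choose r : ℝ))⁻¹ else 0)
    else 0)

/-!
Extend `I` to a set `I'` of exactly `d` items. With `p = e^{-1/d}` the choice of `r` makes
`C(a, r) / C(a + 1, r) = (a + 1 - r) / (a + 1)` close to `p` for `a ≈ n - d`, so a row avoids `I'`
with probability `C(n - d, r) / C(n, r) ≥ p^d = e⁻¹`. By Chernoff's bound, except with probability
`δ/2`, at least `d log(2n/δ)` rows avoid `I'`; each of them misses a fixed item outside `I'` with
probability at most `p`, so such an item is missed by all of them with probability at most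
`p^{d log(2n/δ)} = δ/(2n)`. An item of `I' \ I` is isolated from `I` by a single row with
probability at least `C(n - d, r - 1) / C(n, r) ≥ 1/(e d)`, hence by none of the `m` rows with
probability at most `e^{-m/(e d)} ≤ δ/(2n)`. A union bound over the items finishes the proof.
-/

open Finset Real

lemma exp_neg_le_one_sub_add_sq_div_two {x : ℝ} (hx : 0 ≤ x) : exp (-x) ≤ 1 - x + x ^ 2 / 2 := by
  have hcubic : 1 + x + x ^ 2 / 2 + x ^ 3 / 6 ≤ exp x := by
    simpa [sum_range_succ, Nat.factorial] using sum_le_exp_of_nonneg hx 4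
  rw [exp_neg, inv_le_iff_one_le_mul₀ (exp_pos x)]
  nlinarith [pow_nonneg hx 3, pow_nonneg hx 4, pow_nonneg hx 5]

section WeightedProb

variable {β ι : Type*} [Fintype ι]

def piWeight (w : β → ℝ) (x : ι → β) : ℝ :=
  ∏ t, w (x t)

lemma piWeight_nonneg {w : β → ℝ} (hw : ∀ b, 0 ≤ w b) (x : ι → β) : 0 ≤ piWeight w x :=
  prod_nonneg fun t _ => hw (x t)

lemma prod_ite_mem_const {M : Type*} [CommMonoid M] (S : Finset ι) (a b : M) :
    ∏ t, (if t ∈ S then a else b) = a ^ #S * b ^ (Fintype.card ι - #S) := by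
  rw [prod_ite, prod_const, prod_const, filter_mem_eq_inter, univ_inter, filter_not,
    filter_mem_eq_inter, univ_inter, card_sdiff_of_subset (subset_univ S), card_univ]

lemma sum_filter_card_pow_mul_pow_le {a b c ε : ℝ} (P : ℕ → Prop) (hb : 0 ≤ b) (hc : 0 ≤ c)
    (hε : 0 ≤ ε) (h : ∀ k, P k → a ^ k ≤ ε * c ^ k) :
    ∑ S ∈ univ.filter (fun S : Finset ι => P #S), a ^ #S * b ^ (Fintype.card ι - #S) ≤
      ε * (c + b) ^ Fintype.card ι := by
  calc ∑ S ∈ univ.filter (fun S : Finset ι => P #S), a ^ #S * b ^ (Fintype.card ι - #S)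
      ≤ ∑ S ∈ univ.filter (fun S : Finset ι => P #S), ε * (c ^ #S * b ^ (Fintype.card ι - #S)) :=
        sum_le_sum fun S hS => by
          rw [← mul_assoc]
          exact mul_le_mul_of_nonneg_right (h _ (mem_filter.1 hS).2) (pow_nonneg hb _)
    _ ≤ ∑ S : Finset ι, ε * (c ^ #S * b ^ (Fintype.card ι - #S)) :=
        sum_le_sum_of_subset_of_nonneg (filter_subset _ _) fun _ _ _ => by positivity
    _ = ε * (c + b) ^ Fintype.card ι := by rw [← mul_sum, Fintype.sum_pow_mul_eq_add_pow]

variable [Fintype β] [DecidableEq ι]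

def weightedProb (w : β → ℝ) (Q : β → Prop) : ℝ :=
  ∑ b, if Q b then w b else 0

variable {w : β → ℝ}

lemma weightedProb_nonneg (hw : ∀ b, 0 ≤ w b) (Q : β → Prop) : 0 ≤ weightedProb w Q :=
  sum_nonneg fun b _ => ite_nonneg (hw b) le_rfl

lemma weightedProb_mono (hw : ∀ b, 0 ≤ w b) {Q Q' : β → Prop} (h : ∀ b, Q b → Q' b) :
    weightedProb w Q ≤ weightedProb w Q' := by
  refine sum_le_sum fun b _ => ?_
  by_cases hQ : Q b
  · simp [hQ, h b hQ]
  · rw [if_neg hQ]; exact ite_nonneg (hw b) le_rfl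

lemma weightedProb_or_le (hw : ∀ b, 0 ≤ w b) (Q Q' : β → Prop) :
    weightedProb w (fun b => Q b ∨ Q' b) ≤ weightedProb w Q + weightedProb w Q' := by
  rw [weightedProb, weightedProb, weightedProb, ← sum_add_distrib]
  refine sum_le_sum fun b _ => ?_
  by_cases hQ : Q b <;> by_cases hQ' : Q' b <;> simp [hQ, hQ', hw b]

lemma weightedProb_exists_le (hw : ∀ b, 0 ≤ w b) {κ : Type*} (s : Finset κ)
    (Q : κ → β → Prop) :
    weightedProb w (fun b => ∃ i ∈ s, Q i b) ≤ ∑ i ∈ s, weightedProb w (Q i) := by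
  simp only [weightedProb]
  rw [sum_comm]
  refine sum_le_sum fun b _ => ?_
  split_ifs with h
  · obtain ⟨i, hi, hQ⟩ := h
    calc w b = if Q i b then w b else 0 := (if_pos hQ).symm
      _ ≤ ∑ j ∈ s, if Q j b then w b else 0 :=
        single_le_sum (f := fun j => if Q j b then w b else 0)
          (fun j _ => ite_nonneg (hw b) le_rfl) hi
  · exact sum_nonneg fun j _ => ite_nonneg (hw b) le_rfl

lemma weightedProb_and_add_and_not (Q R : β → Prop) :
    weightedProb w (fun b => Q b ∧ R b) + weightedProb w (fun b => Q b ∧ ¬ R b) =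
      weightedProb w Q := by
  rw [weightedProb, weightedProb, weightedProb, ← sum_add_distrib]
  refine sum_congr rfl fun b _ => ?_
  by_cases hQ : Q b <;> by_cases hR : R b <;> simp [hQ, hR]

lemma weightedProb_add_not (hw1 : ∑ b, w b = 1) (Q : β → Prop) :
    weightedProb w Q + weightedProb w (fun b => ¬ Q b) = 1 := by
  rw [weightedProb, weightedProb, ← sum_add_distrib, ← hw1]
  refine sum_congr rfl fun b _ => ?_
  by_cases hQ : Q b <;> simp [hQ]

lemma weightedProb_piWeight_forall (Q : ι → β → Prop) :
    weightedProb (piWeight w) (fun x => ∀ t, Q t (x t)) = ∏ t, weightedProb w (Q t) := by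
  simp only [weightedProb, piWeight, Fintype.prod_sum]
  refine sum_congr rfl fun x _ => ?_
  split_ifs with h
  · exact prod_congr rfl fun t _ => (if_pos (h t)).symm
  · obtain ⟨t, ht⟩ := not_forall.1 h
    exact (prod_eq_zero (mem_univ t) (if_neg ht)).symm

lemma sum_piWeight : ∑ x : ι → β, piWeight w x = (∑ b, w b) ^ Fintype.card ι := by
  simp only [piWeight, ← Fintype.prod_sum, prod_const, card_univ]

lemma weightedProb_piWeight_card_filter_le (hw : ∀ b, 0 ≤ w b) (G R : β → Prop)
    [DecidablePred G] (P : ℕ → Prop) :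
    weightedProb (piWeight w)
        (fun x : ι → β => P #{t | G (x t)} ∧ ∀ t, G (x t) → R (x t)) ≤
      ∑ S ∈ univ.filter (fun S : Finset ι => P #S),
        weightedProb w (fun b => G b ∧ R b) ^ #S *
          weightedProb w (fun b => ¬ G b) ^ (Fintype.card ι - #S) := by
  have hpi := piWeight_nonneg (ι := ι) hw
  calc _ ≤ weightedProb (piWeight w) (fun x : ι → β => ∃ S ∈ univ.filter (fun S => P #S),
          ∀ t, (if t ∈ S then G (x t) ∧ R (x t) else ¬ G (x t))) := by
        refine weightedProb_mono hpi fun x ⟨hP, hR⟩ =>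
          ⟨({t | G (x t)} : Finset ι), by simpa using hP, fun t => ?_⟩
        by_cases ht : G (x t) <;> simp [ht, hR t]
    _ ≤ _ := weightedProb_exists_le hpi _ _
    _ = _ := by
        refine sum_congr rfl fun S _ => ?_
        rw [weightedProb_piWeight_forall (fun t b => if t ∈ S then G b ∧ R b else ¬ G b),
          ← prod_ite_mem_const]
        exact prod_congr rfl fun t _ => by by_cases ht : t ∈ S <;> simp [ht]

lemma weightedProb_piWeight_forall_not_le (hw : ∀ b, 0 ≤ w b) (hw1 : ∑ b, w b = 1)
    (Q : β → Prop) :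
    weightedProb (piWeight w) (fun x : ι → β => ∀ t, ¬ Q (x t)) ≤
      exp (-(Fintype.card ι * weightedProb w Q)) := by
  have hnot : weightedProb w (fun b => ¬ Q b) = 1 - weightedProb w Q := by
    linarith [weightedProb_add_not hw1 Q]
  rw [weightedProb_piWeight_forall (fun _ b => ¬ Q b), prod_const, card_univ, hnot]
  calc (1 - weightedProb w Q) ^ Fintype.card ι ≤ exp (-weightedProb w Q) ^ Fintype.card ι :=
        pow_le_pow_left₀ (hnot ▸ weightedProb_nonneg hw _) (one_sub_le_exp_neg _) _
    _ = exp (-(Fintype.card ι * weightedProb w Q)) := by rw [← exp_nat_mul, mul_neg]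

lemma weightedProb_piWeight_card_ge_and_forall_le (hw : ∀ b, 0 ≤ w b) (hw1 : ∑ b, w b = 1)
    (G R : β → Prop) [DecidablePred G] {γ x₀ : ℝ} (hγ : 0 ≤ γ)
    (hGR : weightedProb w (fun b => G b ∧ R b) ≤ exp (-γ) * weightedProb w G) :
    weightedProb (piWeight w)
        (fun x : ι → β => x₀ ≤ #{t | G (x t)} ∧ ∀ t, G (x t) → R (x t)) ≤
      exp (-(γ * x₀)) := by
  have hα := weightedProb_nonneg hw G
  refine (weightedProb_piWeight_card_filter_le (ι := ι) hw G R fun k => x₀ ≤ k).trans ?_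
  calc _ ≤ exp (-(γ * x₀)) * (weightedProb w G + weightedProb w (fun b => ¬ G b)) ^
        Fintype.card ι := by
        refine sum_filter_card_pow_mul_pow_le (ι := ι) (fun k : ℕ => x₀ ≤ k)
          (weightedProb_nonneg hw _) hα (exp_pos _).le fun k hk => ?_
        calc weightedProb w (fun b => G b ∧ R b) ^ k ≤ (exp (-γ) * weightedProb w G) ^ k :=
              pow_le_pow_left₀ (weightedProb_nonneg hw _) hGR k
          _ = exp (-(γ * k)) * weightedProb w G ^ k := by rw [mul_pow, ← exp_nat_mul]; ring_nf
          _ ≤ exp (-(γ * x₀)) * weightedProb w G ^ k := by gcongr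
    _ = exp (-(γ * x₀)) := by rw [weightedProb_add_not hw1, one_pow, mul_one]

lemma weightedProb_piWeight_card_lt_le_exp_mul_pow (hw : ∀ b, 0 ≤ w b) (hw1 : ∑ b, w b = 1)
    (G : β → Prop) [DecidablePred G] {x₀ l : ℝ} (hl : 0 ≤ l) :
    weightedProb (piWeight w) (fun x : ι → β => (#{t | G (x t)} : ℝ) < x₀) ≤
      exp (l * x₀) * (weightedProb w G * exp (-l) + (1 - weightedProb w G)) ^ Fintype.card ι := by
  set α := weightedProb w G
  have hα := weightedProb_nonneg hw G
  have hnot : weightedProb w (fun b => ¬ G b) = 1 - α := by linarith [weightedProb_add_not hw1 G]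
  calc _ ≤ weightedProb (piWeight w)
        (fun x : ι → β => (#{t | G (x t)} : ℝ) < x₀ ∧ ∀ t, G (x t) → True) :=
        weightedProb_mono (piWeight_nonneg hw) fun x hx => ⟨hx, fun _ _ => trivial⟩
    _ ≤ _ := by
        refine (weightedProb_piWeight_card_filter_le (ι := ι) hw G (fun _ => True)
          (fun k : ℕ => (k : ℝ) < x₀)).trans ?_
        rw [← hnot]
        refine sum_filter_card_pow_mul_pow_le (ι := ι) (fun k : ℕ => (k : ℝ) < x₀)
          (weightedProb_nonneg hw _) (mul_nonneg hα (exp_pos _).le) (exp_pos _).le fun k hk => ?_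
        have hk' : exp (l * x₀) * (α * exp (-l)) ^ k = exp (l * (x₀ - k)) * α ^ k := by
          rw [mul_pow, ← exp_nat_mul, mul_sub, sub_eq_add_neg, exp_add]
          ring_nf
        simp only [and_true]
        rw [hk']
        exact le_mul_of_one_le_left (pow_nonneg hα k)
          (one_le_exp (mul_nonneg hl (by linarith [show (k : ℝ) < x₀ from hk])))

/-- Chernoff's bound, with the exponent `l = (A - x₀) / A` where `A = m α` is the mean. -/
lemma weightedProb_piWeight_card_lt_le (hw : ∀ b, 0 ≤ w b) (hw1 : ∑ b, w b = 1)
    (G : β → Prop) [DecidablePred G] {x₀ : ℝ} (hA : 0 < Fintype.card ι * weightedProb w G)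
    (hx₀ : x₀ ≤ Fintype.card ι * weightedProb w G) :
    weightedProb (piWeight w) (fun x : ι → β => (#{t | G (x t)} : ℝ) < x₀) ≤
      exp (-((Fintype.card ι * weightedProb w G - x₀) ^ 2 /
        (2 * (Fintype.card ι * weightedProb w G)))) := by
  set α := weightedProb w G
  set A := Fintype.card ι * α
  set l := (A - x₀) / A
  have hl : 0 ≤ l := div_nonneg (by linarith) hA.le
  have hα := weightedProb_nonneg hw G
  have hα1 : α ≤ 1 := by linarith [weightedProb_add_not hw1 G, weightedProb_nonneg hw (¬ G ·)]
  have hbase : α * exp (-l) + (1 - α) ≤ exp (α * (-l + l ^ 2 / 2)) := by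
    have := mul_le_mul_of_nonneg_left (exp_neg_le_one_sub_add_sq_div_two hl) hα
    linarith [add_one_le_exp (α * (-l + l ^ 2 / 2))]
  calc _ ≤ exp (l * x₀) * (α * exp (-l) + (1 - α)) ^ Fintype.card ι :=
        weightedProb_piWeight_card_lt_le_exp_mul_pow hw hw1 G hl
    _ ≤ exp (l * x₀) * exp (α * (-l + l ^ 2 / 2)) ^ Fintype.card ι := by gcongr
    _ = exp (-((A - x₀) ^ 2 / (2 * A))) := by
        rw [← exp_nat_mul, ← exp_add]
        congr 1
        simp only [l, A]
        field_simp
        ring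

lemma weightedProb_piWeight_card_lt_le_exp_neg (hw : ∀ b, 0 ≤ w b) (hw1 : ∑ b, w b = 1)
    (G : β → Prop) [DecidablePred G] {x₀ L : ℝ} (hx₀ : 0 < x₀) (hL : 0 ≤ L)
    (hα : exp (-1) ≤ weightedProb w G)
    (hm : exp 1 * x₀ ≤ Fintype.card ι - √(2 * exp 1 * Fintype.card ι * L)) :
    weightedProb (piWeight w) (fun x : ι → β => (#{t | G (x t)} : ℝ) < x₀) ≤ exp (-L) := by
  set m : ℝ := (Fintype.card ι : ℝ)
  set α := weightedProb w G
  have hαe : 1 ≤ α * exp 1 := by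
    simpa [← exp_add] using mul_le_mul_of_nonneg_right hα (exp_pos 1).le
  have hα0 : 0 < α := (exp_pos _).trans_le hα
  have hsqrt : √(2 * (m * α) * L) ≤ α * √(2 * exp 1 * m * L) := by
    rw [show α * √(2 * exp 1 * m * L) = √(α ^ 2 * (2 * exp 1 * m * L)) by
      rw [sqrt_mul (sq_nonneg α), sqrt_sq hα0.le]]
    refine sqrt_le_sqrt ?_
    have hm0 : 0 ≤ m := Nat.cast_nonneg _
    have := mul_le_mul_of_nonneg_right hαe (mul_nonneg (mul_nonneg hm0 hL) hα0.le)
    nlinarith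
  have hgap : √(2 * (m * α) * L) ≤ m * α - x₀ := by
    nlinarith [mul_le_mul_of_nonneg_left hm hα0.le, mul_le_mul_of_nonneg_right hαe hx₀.le]
  have hA : 0 < m * α := by linarith [sqrt_nonneg (2 * (m * α) * L)]
  refine (weightedProb_piWeight_card_lt_le hw hw1 G hA
    (by linarith [sqrt_nonneg (2 * (m * α) * L)])).trans ?_
  rw [exp_le_exp, neg_le_neg_iff, le_div_iff₀ (by positivity)]
  have := sq_sqrt (show 0 ≤ 2 * (m * α) * L by positivity)
  nlinarith [sqrt_nonneg (2 * (m * α) * L)]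

end WeightedProb

section Disjunct

variable {m n : ℕ} {w : (Fin n → Bool) → ℝ}

/-- An item `i ∉ I` that no row isolates from `I` is either in `I' ⊇ I`, or it lies outside `I'`
and then every row avoiding `I'` misses it. -/
lemma weightedProb_not_disjunct_le (hw : ∀ b, 0 ≤ w b) {I I' : Finset (Fin n)} (hII' : I ⊆ I')
    (x₀ ε : ℝ)
    (h_out : ∀ i ∉ I', weightedProb (piWeight w) (fun M : Fin m → Fin n → Bool =>
      x₀ ≤ #{t | ∀ j ∈ I', M t j = false} ∧ ∀ t, (∀ j ∈ I', M t j = false) → M t i = false) ≤ ε)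
    (h_in : ∀ i ∈ I', i ∉ I → weightedProb (piWeight w) (fun M : Fin m → Fin n → Bool =>
      ∀ t, ¬ (M t i = true ∧ ∀ j ∈ I, M t j = false)) ≤ ε) :
    weightedProb (piWeight w) (fun M : Fin m → Fin n → Bool => ¬ Disjunct I M) ≤
      weightedProb (piWeight w) (fun M : Fin m → Fin n → Bool =>
        (#{t | ∀ j ∈ I', M t j = false} : ℝ) < x₀) + #Iᶜ * ε := by
  have hpi := piWeight_nonneg (ι := Fin m) hw
  set bad : Fin n → (Fin m → Fin n → Bool) → Prop := fun i M =>
    if i ∈ I' then ∀ t, ¬ (M t i = true ∧ ∀ j ∈ I, M t j = false)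
    else x₀ ≤ #{t | ∀ j ∈ I', M t j = false} ∧ ∀ t, (∀ j ∈ I', M t j = false) → M t i = false
  have h_bad : ∀ i ∈ Iᶜ, weightedProb (piWeight w) (bad i) ≤ ε := by
    intro i hi
    by_cases hiI' : i ∈ I'
    · simpa [bad, hiI'] using h_in i hiI' (mem_compl.1 hi)
    · simpa [bad, hiI'] using h_out i hiI'
  calc _ ≤ weightedProb (piWeight w) (fun M : Fin m → Fin n → Bool =>
        (#{t | ∀ j ∈ I', M t j = false} : ℝ) < x₀ ∨ ∃ i ∈ Iᶜ, bad i M) := by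
        refine weightedProb_mono hpi fun M hM => ?_
        simp only [Disjunct, not_forall] at hM
        obtain ⟨i, hiI, hi⟩ := hM
        by_cases hiI' : i ∈ I'
        · exact Or.inr ⟨i, mem_compl.2 hiI, by simpa [bad, hiI'] using hi⟩
        by_cases hx : (#{t | ∀ j ∈ I', M t j = false} : ℝ) < x₀
        · exact Or.inl hx
        refine Or.inr ⟨i, mem_compl.2 hiI, ?_⟩
        simp only [bad, if_neg hiI']
        refine ⟨not_lt.1 hx, fun t ht => ?_⟩
        by_contra hti
        exact hi ⟨t, by simpa using hti, fun j hj => ht j (hII' hj)⟩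
    _ ≤ _ := (weightedProb_or_le hpi _ _).trans (add_le_add le_rfl
        ((weightedProb_exists_le hpi _ _).trans (by simpa using sum_le_sum h_bad)))

end Disjunct

section RrSD

variable {n r : ℕ}

def rrsdRowWeight (n r : ℕ) (v : Fin n → Bool) : ℝ :=
  if rowWeight v = r then ((n.choose r : ℝ))⁻¹ else 0

lemma rrsdProb_eq_weightedProb (m n r : ℕ) (E : (Fin m → Fin n → Bool) → Prop) :
    rrsdProb m n r E = weightedProb (piWeight (rrsdRowWeight n r)) E :=
  rfl

lemma rrsdRowWeight_nonneg (v : Fin n → Bool) : 0 ≤ rrsdRowWeight n r v :=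
  ite_nonneg (inv_nonneg.2 (Nat.cast_nonneg _)) le_rfl

lemma card_rowWeight_eq_and_avoid (A : Finset (Fin n)) :
    #{v : Fin n → Bool | rowWeight v = r ∧ ∀ j ∈ A, v j = false} = (n - #A).choose r := by
  rw [show n - #A = #Aᶜ by simp [card_compl], ← card_powersetCard]
  refine card_nbij' (fun v => ({j | v j = true} : Finset (Fin n))) (fun s j => decide (j ∈ s))
    ?_ ?_ ?_ ?_
  · intro v hv
    simp only [mem_coe, mem_filter, mem_univ, true_and] at hv
    refine mem_powersetCard.2 ⟨fun j hj => mem_compl.2 fun hjA => ?_, hv.1⟩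
    simp [hv.2 j hjA] at hj
  · intro s hs
    obtain ⟨hsA, hs⟩ := mem_powersetCard.1 hs
    simp only [mem_coe, mem_filter, mem_univ, true_and]
    exact ⟨by simpa [rowWeight] using hs,
      fun j hj => by simpa using fun hjs => mem_compl.1 (hsA hjs) hj⟩
  · intro v _
    funext j
    simp
  · intro s _
    ext j
    simp

lemma weightedProb_rrsdRowWeight_avoid (A : Finset (Fin n)) :
    weightedProb (rrsdRowWeight n r) (fun v => ∀ j ∈ A, v j = false) =
      (n - #A).choose r / n.choose r := by
  rw [← card_rowWeight_eq_and_avoid, weightedProb]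
  simp only [rrsdRowWeight, ← ite_and]
  simp [sum_ite, div_eq_mul_inv, and_comm]

lemma sum_rrsdRowWeight (hr : r ≤ n) : ∑ v, rrsdRowWeight n r v = 1 := by
  have h := weightedProb_rrsdRowWeight_avoid (r := r) (∅ : Finset (Fin n))
  simpa [weightedProb, Nat.choose_pos hr |>.ne'] using h

end RrSD

section Binomial

lemma cast_choose_mul_succ_eq {a r : ℕ} (hra : r ≤ a + 1) :
    (a.choose r : ℝ) * (a + 1) = (a + 1).choose r * ((a + 1 : ℝ) - r) := by
  have h := congrArg (Nat.cast (R := ℝ)) (Nat.choose_mul_succ_eq a r)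
  push_cast [Nat.cast_sub hra] at h
  exact h

lemma mul_choose_succ_le_choose {p : ℝ} {a r : ℕ} (hr : (r : ℝ) ≤ (1 - p) * (a + 1)) :
    p * (a + 1).choose r ≤ a.choose r := by
  rcases le_or_gt r (a + 1) with hra | hra
  · refine le_of_mul_le_mul_right ?_ (by positivity : (0 : ℝ) < a + 1)
    rw [cast_choose_mul_succ_eq hra]
    nlinarith [(Nat.cast_nonneg _ : (0 : ℝ) ≤ (a + 1).choose r)]
  · simp [Nat.choose_eq_zero_of_lt hra]

lemma choose_le_mul_choose_succ {p : ℝ} {a r : ℕ} (hp : 0 ≤ p) (hr : (1 - p) * (a + 1) ≤ r) :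
    (a.choose r : ℝ) ≤ p * (a + 1).choose r := by
  rcases le_or_gt r (a + 1) with hra | hra
  · refine le_of_mul_le_mul_right ?_ (by positivity : (0 : ℝ) < a + 1)
    rw [cast_choose_mul_succ_eq hra]
    nlinarith [(Nat.cast_nonneg _ : (0 : ℝ) ≤ (a + 1).choose r)]
  · rw [Nat.choose_eq_zero_of_lt (show a < r by omega), Nat.cast_zero]
    positivity

lemma pow_mul_choose_add_le_choose {p : ℝ} (hp0 : 0 ≤ p) (hp1 : p ≤ 1) {a r : ℕ}
    (hr : (r : ℝ) ≤ (1 - p) * (a + 1)) (j : ℕ) :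
    p ^ j * (a + j).choose r ≤ a.choose r := by
  induction j with
  | zero => simp
  | succ j ih =>
    have hr' : (r : ℝ) ≤ (1 - p) * ((a + j : ℕ) + 1) := by
      push_cast
      nlinarith [(Nat.cast_nonneg j : (0 : ℝ) ≤ j)]
    calc p ^ (j + 1) * (a + (j + 1)).choose r = p ^ j * (p * (a + j + 1).choose r) := by ring_nf
      _ ≤ p ^ j * (a + j).choose r := by gcongr; exact_mod_cast mul_choose_succ_le_choose hr'
      _ ≤ a.choose r := ih

lemma add_one_le_exp_one_div_mul_mul {d s r : ℕ} (hd : 1 ≤ d) (hr0 : 1 ≤ r)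
    (hr : (1 - exp (-1 / d)) * s ≤ r) :
    (s : ℝ) + 1 ≤ exp (1 / d) * d * r := by
  set y := exp (1 / d)
  have hD : (1 : ℝ) ≤ d := by exact_mod_cast hd
  have hy : d * y ≥ d + 1 + 1 / (2 * d) := by
    have := mul_le_mul_of_nonneg_left (quadratic_le_exp_of_nonneg (by positivity : (0:ℝ) ≤ 1 / d))
      (by positivity : (0 : ℝ) ≤ d)
    have h1 : (d : ℝ) * (1 + 1 / d + (1 / d) ^ 2 / 2) = d + 1 + 1 / (2 * d) := by
      field_simp
    linarith
  have hyr : (y - 1) * s ≤ y * r := by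
    have hpy : exp (-1 / d) * y = 1 := by rw [← exp_add, neg_div, neg_add_cancel, exp_zero]
    nlinarith [exp_pos (1 / (d : ℝ)), (Nat.cast_nonneg s : (0:ℝ) ≤ s)]
  have hR : (1 : ℝ) ≤ r := by exact_mod_cast hr0
  have hy1 : 1 ≤ y := one_le_exp (by positivity)
  have hdy : (d : ℝ) + 1 < d * y := by linarith [show (0 : ℝ) < 1 / (2 * d) by positivity]
  -- With `d y ≥ d + 1 + 1/(2d)`: for `s ≥ 2d` the lower bound on `r` suffices; below that,
  -- integrality does (`r ≥ 1`, and `r ≥ 2` once `s > d`).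
  rcases le_or_gt s d with hsd | hsd
  · have : (s : ℝ) ≤ d := by exact_mod_cast hsd
    nlinarith [mul_le_mul_of_nonneg_left hR (by positivity : (0 : ℝ) ≤ d * y)]
  rcases lt_or_ge s (2 * d) with hs2 | hs2
  · have hr2 : (2 : ℝ) ≤ r := by
      have : ((d : ℝ) + 1) ≤ s := by exact_mod_cast hsd
      have : y * 1 < y * r := by
        nlinarith [mul_le_mul_of_nonneg_left this (by linarith : 0 ≤ y - 1)]
      have : (1 : ℝ) < r := lt_of_mul_lt_mul_left this (by positivity)
      have : 2 ≤ r := by exact_mod_cast this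
      exact_mod_cast this
    have : (s : ℝ) + 1 ≤ 2 * d := by exact_mod_cast hs2
    nlinarith [mul_le_mul_of_nonneg_left hr2 (by positivity : (0 : ℝ) ≤ d * y)]
  · have : 2 * (d : ℝ) ≤ s := by exact_mod_cast hs2
    have h2 : 1 ≤ (s : ℝ) / (2 * d) := by rw [le_div_iff₀ (by positivity)]; linarith
    have h3 : (d * y - d) * s ≥ s + s / (2 * d) := by
      have : (s : ℝ) / (2 * d) = s * (1 / (2 * d)) := by ring
      nlinarith [(Nat.cast_nonneg s : (0:ℝ) ≤ s)]
    nlinarith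

lemma exp_neg_one_div_lt_one {d : ℕ} (hd : 1 ≤ d) : exp (-1 / d) < 1 :=
  exp_lt_one_iff.2 (div_neg_of_neg_of_pos (by norm_num) (by exact_mod_cast hd))

lemma cast_sub_add_one {d n : ℕ} (hn : d ≤ n) : ((n - d : ℕ) : ℝ) + 1 = n - d + 1 := by
  push_cast [Nat.cast_sub hn]; ring

lemma rrsd_one_le_and_le_sub {d n r : ℕ} (hd : 1 ≤ d) (hn : d < n)
    (hr1 : (1 - exp (-1 / d)) * ((n : ℝ) - d) ≤ r)
    (hr2 : (r : ℝ) ≤ (1 - exp (-1 / d)) * ((n : ℝ) - d + 1)) :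
    1 ≤ r ∧ r ≤ n - d := by
  have hp1 := exp_neg_one_div_lt_one hd
  have hdn : (d : ℝ) < n := by exact_mod_cast hn
  constructor
  · have : (0 : ℝ) < r := lt_of_lt_of_le (mul_pos (by linarith) (by linarith)) hr1
    exact_mod_cast this
  · have : (r : ℝ) < (n - d : ℕ) + 1 := by
      rw [cast_sub_add_one hn.le]; nlinarith [exp_pos (-1 / (d : ℝ))]
    exact Nat.lt_succ_iff.1 (by exact_mod_cast this)

lemma exp_neg_one_mul_choose_le {d n r : ℕ} (hd : 1 ≤ d) (hn : d ≤ n)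
    (hr2 : (r : ℝ) ≤ (1 - exp (-1 / d)) * ((n : ℝ) - d + 1)) :
    exp (-1) * n.choose r ≤ (n - d).choose r := by
  have hp0 := exp_pos (-1 / d)
  have hp1 := exp_neg_one_div_lt_one hd
  have h := pow_mul_choose_add_le_choose hp0.le hp1.le (a := n - d) (r := r)
    (by rwa [cast_sub_add_one hn]) d
  rwa [Nat.sub_add_cancel hn, ← exp_nat_mul, mul_div_cancel₀ _ (by positivity)] at h

lemma choose_sub_one_le_mul_choose {d n r : ℕ} (hn : d < n)
    (hr1 : (1 - exp (-1 / d)) * ((n : ℝ) - d) ≤ r) :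
    ((n - d - 1).choose r : ℝ) ≤ exp (-1 / d) * (n - d).choose r := by
  have h := choose_le_mul_choose_succ (exp_pos (-1 / d)).le (a := n - d - 1) (r := r)
    (by rwa [show ((n - d - 1 : ℕ) : ℝ) + 1 = n - d by
      push_cast [Nat.cast_sub hn.le, Nat.cast_sub (show 1 ≤ n - d by omega)]; ring])
  rwa [show n - d - 1 + 1 = n - d by omega] at h

lemma choose_le_exp_one_mul_mul_choose {d n r : ℕ} (hd : 1 ≤ d) (hn : d < n)
    (hr1 : (1 - exp (-1 / d)) * ((n : ℝ) - d) ≤ r)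
    (hr2 : (r : ℝ) ≤ (1 - exp (-1 / d)) * ((n : ℝ) - d + 1)) :
    (n.choose r : ℝ) ≤ exp 1 * d * (n - d).choose (r - 1) := by
  have hp0 := exp_pos (-1 / d)
  have hp1 := exp_neg_one_div_lt_one hd
  obtain ⟨hr0, -⟩ := rrsd_one_le_and_le_sub hd hn hr1 hr2
  have hpow := pow_mul_choose_add_le_choose hp0.le hp1.le (a := n - d + 1) (r := r)
    (by rw [Nat.cast_add_one, cast_sub_add_one hn.le]; nlinarith) (d - 1)
  rw [show n - d + 1 + (d - 1) = n by omega] at hpow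
  have hpascal : (r : ℝ) * (n - d + 1).choose r = (n - d + 1) * (n - d).choose (r - 1) := by
    have h := congrArg (Nat.cast (R := ℝ)) (Nat.add_one_mul_choose_eq (n - d) (r - 1))
    rw [Nat.sub_add_cancel hr0] at h
    push_cast [Nat.cast_sub hn.le] at h
    linarith
  have hkey := add_one_le_exp_one_div_mul_mul hd hr0 (by rwa [Nat.cast_sub hn.le])
  rw [Nat.cast_sub hn.le] at hkey
  have hexp : exp 1 * exp (-1 / d) ^ (d - 1) = exp (1 / d) := by
    rw [← exp_nat_mul, ← exp_add, Nat.cast_sub hd]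
    congr 1
    field_simp
    ring
  have hpos : (0 : ℝ) < n - d + 1 := by linarith [show (d : ℝ) < n by exact_mod_cast hn]
  refine le_of_mul_le_mul_right ?_ hpos
  calc (n.choose r : ℝ) * (n - d + 1) ≤ n.choose r * (exp (1 / d) * d * r) := by gcongr
    _ = exp 1 * d * r * (exp (-1 / d) ^ (d - 1) * n.choose r) := by rw [← hexp]; ring
    _ ≤ exp 1 * d * r * (n - d + 1).choose r := by gcongr
    _ = exp 1 * d * (n - d).choose (r - 1) * (n - d + 1) := by rw [mul_assoc, hpascal]; ring

end Binomial

section RrSDBounds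

variable {d n m r : ℕ} {I I' : Finset (Fin n)}

lemma rrsdProb_few_rows_avoid_le (hd : 1 ≤ d) (hr : r ≤ n)
    (hr2 : (r : ℝ) ≤ (1 - exp (-1 / d)) * ((n : ℝ) - d + 1)) (hI' : #I' = d) {x₀ L : ℝ}
    (hx₀ : 0 < x₀) (hL : 0 ≤ L) (hm : exp 1 * x₀ ≤ m - √(2 * exp 1 * m * L)) :
    rrsdProb m n r (fun M => (#{t | ∀ j ∈ I', M t j = false} : ℝ) < x₀) ≤ exp (-L) := by
  have hdn : d ≤ n := hI' ▸ card_le_univ I' |>.trans_eq (Fintype.card_fin n)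
  have hα : exp (-1) ≤ weightedProb (rrsdRowWeight n r) (fun v => ∀ j ∈ I', v j = false) := by
    rw [weightedProb_rrsdRowWeight_avoid, hI',
      le_div_iff₀ (by exact_mod_cast Nat.choose_pos hr)]
    exact exp_neg_one_mul_choose_le hd hdn hr2
  rw [rrsdProb_eq_weightedProb]
  exact weightedProb_piWeight_card_lt_le_exp_neg rrsdRowWeight_nonneg (sum_rrsdRowWeight hr)
    (fun v => ∀ j ∈ I', v j = false) hx₀ hL hα (by rwa [Fintype.card_fin])

lemma rrsdProb_avoiding_rows_miss_le (hd : 1 ≤ d) (hn : d < n)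
    (hr1 : (1 - exp (-1 / d)) * ((n : ℝ) - d) ≤ r) (hr : r ≤ n) (hI' : #I' = d) {i : Fin n}
    (hi : i ∉ I') (L : ℝ) :
    rrsdProb m n r (fun M => d * L ≤ #{t | ∀ j ∈ I', M t j = false} ∧
      ∀ t, (∀ j ∈ I', M t j = false) → M t i = false) ≤ exp (-L) := by
  have hGR : weightedProb (rrsdRowWeight n r)
      (fun v => (∀ j ∈ I', v j = false) ∧ v i = false) ≤
      exp (-(1 / d)) * weightedProb (rrsdRowWeight n r) (fun v => ∀ j ∈ I', v j = false) := by
    have : (fun v : Fin n → Bool => (∀ j ∈ I', v j = false) ∧ v i = false) =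
        fun v => ∀ j ∈ insert i I', v j = false := by
      ext v; simp [and_comm]
    rw [this, weightedProb_rrsdRowWeight_avoid, weightedProb_rrsdRowWeight_avoid,
      card_insert_of_notMem hi, hI', ← mul_div_assoc, ← neg_div,
      show n - (d + 1) = n - d - 1 by omega]
    exact div_le_div_of_nonneg_right (choose_sub_one_le_mul_choose hn hr1) (Nat.cast_nonneg _)
  have h := weightedProb_piWeight_card_ge_and_forall_le (ι := Fin m) rrsdRowWeight_nonneg
    (sum_rrsdRowWeight hr) (fun v => ∀ j ∈ I', v j = false) (fun v => v i = false)
    (x₀ := d * L) (by positivity) hGR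
  rwa [← mul_assoc, one_div_mul_cancel (by positivity), one_mul] at h

lemma rrsdProb_not_isolated_le (hd : 1 ≤ d) (hn : d < n)
    (hr1 : (1 - exp (-1 / d)) * ((n : ℝ) - d) ≤ r)
    (hr2 : (r : ℝ) ≤ (1 - exp (-1 / d)) * ((n : ℝ) - d + 1)) (hII' : I ⊆ I') (hI' : #I' = d)
    {i : Fin n} (hi : i ∈ I') (hiI : i ∉ I) {L : ℝ} (hm : exp 1 * d * L ≤ m) :
    rrsdProb m n r (fun M => ∀ t, ¬ (M t i = true ∧ ∀ j ∈ I, M t j = false)) ≤ exp (-L) := by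
  obtain ⟨hr0, hrn⟩ := rrsd_one_le_and_le_sub hd hn hr1 hr2
  set w := rrsdRowWeight n r
  have hchoose : (0 : ℝ) < n.choose r := by exact_mod_cast Nat.choose_pos (by omega)
  have hq : ((n - d).choose (r - 1) : ℝ) / n.choose r =
      weightedProb w (fun v => (∀ j ∈ I'.erase i, v j = false) ∧ v i = true) := by
    have hsplit := weightedProb_and_add_and_not (w := w)
      (fun v => ∀ j ∈ I'.erase i, v j = false) (fun v => v i = true)
    have : (fun v : Fin n → Bool => (∀ j ∈ I'.erase i, v j = false) ∧ ¬ v i = true) =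
        fun v => ∀ j ∈ I', v j = false := by
      ext v
      refine ⟨fun ⟨h, hvi⟩ j hj => ?_,
        fun h => ⟨fun j hj => h j (mem_of_mem_erase hj), by simp [h i hi]⟩⟩
      by_cases hji : j = i
      · simpa [hji] using hvi
      · exact h j (mem_erase.2 ⟨hji, hj⟩)
    rw [this, weightedProb_rrsdRowWeight_avoid, weightedProb_rrsdRowWeight_avoid,
      card_erase_of_mem hi, hI', show n - (d - 1) = n - d + 1 by omega] at hsplit
    have hpascal := Nat.choose_succ_succ' (n - d) (r - 1)
    rw [Nat.sub_add_cancel hr0] at hpascal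
    rw [hpascal, Nat.cast_add, add_div] at hsplit
    linarith
  have hq' : 1 / (exp 1 * d) ≤ weightedProb w (fun v => v i = true ∧ ∀ j ∈ I, v j = false) := by
    calc 1 / (exp 1 * d) ≤ ((n - d).choose (r - 1) : ℝ) / n.choose r := by
          rw [div_le_div_iff₀ (by positivity) hchoose, one_mul]
          linarith [choose_le_exp_one_mul_mul_choose hd hn hr1 hr2]
      _ ≤ _ := hq ▸ weightedProb_mono rrsdRowWeight_nonneg fun v ⟨hv, hvi⟩ =>
          ⟨hvi, fun j hj => hv j (mem_erase.2 ⟨fun hji => hiI (hji ▸ hj), hII' hj⟩)⟩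
  refine (weightedProb_piWeight_forall_not_le rrsdRowWeight_nonneg
    (sum_rrsdRowWeight (by omega)) (fun v => v i = true ∧ ∀ j ∈ I, v j = false)).trans ?_
  rw [Fintype.card_fin, exp_le_exp, neg_le_neg_iff]
  calc L ≤ m * (1 / (exp 1 * d)) := by
        rw [mul_one_div, le_div_iff₀ (by positivity)]; linarith
    _ ≤ _ := by gcongr

end RrSDBounds

theorem rrsd_upper_bound_general (d n m r : ℕ) (hd : 1 ≤ d) (hn : d < n) (δ : ℝ)
    (hδ : δ ∈ Set.Ioo (0 : ℝ) 1)
    (hr1 : (1 - Real.exp (-(1 : ℝ) / d)) * ((n : ℝ) - d) ≤ (r : ℝ))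
    (hr2 : (r : ℝ) ≤ (1 - Real.exp (-(1 : ℝ) / d)) * ((n : ℝ) - d + 1))
    (hm2 : (m : ℝ) - Real.sqrt (2 * Real.exp 1 * m * Real.log (2 / δ)) ≥
      Real.exp 1 * d * Real.log (2 * n / δ))
    (I : Finset (Fin n)) (hI : I.card ≤ d) :
    rrsdProb m n r (fun M => Disjunct I M) ≥ 1 - δ := by
  obtain ⟨hδ0, hδ1⟩ := hδ
  obtain ⟨-, hrn⟩ := rrsd_one_le_and_le_sub hd hn hr1 hr2
  obtain ⟨I', hII', -, hI'⟩ := exists_subsuperset_card_eq (subset_univ I) hI (by simpa using hn.le)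
  have hn1 : (1 : ℝ) ≤ n := by exact_mod_cast hd.trans hn.le
  set L := log (2 * n / δ)
  have hL : 0 < L := log_pos (by rw [lt_div_iff₀ hδ0]; linarith)
  have hmL : exp 1 * d * L ≤ m := by linarith [sqrt_nonneg (2 * exp 1 * m * log (2 / δ))]
  have h_lower := rrsdProb_few_rows_avoid_le (m := m) (x₀ := d * L) (L := log (2 / δ)) hd
    (by omega) hr2 hI' (by positivity) (log_nonneg (by rw [le_div_iff₀ hδ0]; linarith))
    (by linarith)
  have h_bad := weightedProb_not_disjunct_le rrsdRowWeight_nonneg hII' (d * L) (exp (-L))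
    (fun i hi => rrsdProb_avoiding_rows_miss_le hd hn hr1 (by omega) hI' hi L)
    (fun i hi hiI => rrsdProb_not_isolated_le hd hn hr1 hr2 hII' hI' hi hiI hmL)
  have h_total := weightedProb_add_not (w := piWeight (ι := Fin m) (rrsdRowWeight n r))
    (by rw [sum_piWeight, sum_rrsdRowWeight (by omega), one_pow]) (fun M => Disjunct I M)
  have h_union : (#Iᶜ : ℝ) * exp (-L) ≤ δ / 2 := by
    have : (#Iᶜ : ℝ) ≤ n := by exact_mod_cast (card_le_univ Iᶜ).trans_eq (Fintype.card_fin n)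
    calc (#Iᶜ : ℝ) * exp (-L) ≤ n * (δ / (2 * n)) := by
          rw [exp_neg, exp_log (by positivity), inv_div]; gcongr
      _ = δ / 2 := by field_simp
  rw [rrsdProb_eq_weightedProb, exp_neg, exp_log (by positivity), inv_div] at h_lower
  rw [ge_iff_le, rrsdProb_eq_weightedProb]
  linarith

theorem rrsd_upper_bound (d n m r : ℕ) (hd : 1 ≤ d) (hn : d < n) (δ : ℝ)
    (hδ : δ ∈ Set.Ioo (0 : ℝ) 1)
    (hr1 : (1 - Real.exp (-(1 : ℝ) / d)) * ((n : ℝ) - d) ≤ (r : ℝ))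
    (hr2 : (r : ℝ) ≤ (1 - Real.exp (-(1 : ℝ) / d)) * ((n : ℝ) - d + 1))
    (hm : 0 < m)
    (hm2 : (m : ℝ) - Real.sqrt (2 * Real.exp 1 * m * Real.log (2 / δ)) ≥
      Real.exp 1 * d * Real.log (2 * n / δ))
    (I : Finset (Fin n)) (hI : I.card ≤ d) :
    rrsdProb m n r (fun M => Disjunct I M) ≥ 1 - δ :=
  rrsd_upper_bound_general d n m r hd hn δ hδ hr1 hr2 hm2 I hI

end
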